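/- arXiv:2407.18260 — 4 statements merged into one kernel-verified Lean document; each statement's English description precedes it below -/
import Mathlib

section
/- Let G be a finite group and H ≤ G a subgroup. If ρ ∈ 𝒫_H then Ind_H^G ρ ∈ 𝒫_G. -/
open scoped Classical

noncomputable section

/-- The complex conjugate of a complex-valued function. -/
def conjFun {G : Type} (f : G → ℂ) : G → ℂ := fun g => starRingEnd ℂ (f g)

/-- Induction of class functions from a subgroup `H` of `G` to `G`. -/
def indChar {G : Type} [Group G] [Fintype G] (H : Subgroup G) (f : ↥H → ℂ) : G → ℂ :=
  fun g => (Nat.card H : ℂ)⁻¹ *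
    ∑ x : G, if h : x⁻¹ * g * x ∈ H then f ⟨x⁻¹ * g * x, h⟩ else 0

/-- The determinant (linear) character of a finite-dimensional complex representation. -/
def detRep {G : Type} [Group G] (V : FDRep ℂ G) : G → ℂ := fun g => LinearMap.det (V.ρ g)

/-- `f` is the character of some finite-dimensional complex representation of `G`. -/
def IsChar {G : Type} [Group G] (f : G → ℂ) : Prop := ∃ V : FDRep ℂ G, V.character = f

/-- A generalised (virtual) character: a `ℤ`-linear combination of characters. -/
def IsGenChar {G : Type} [Group G] (f : G → ℂ) : Prop :=
  f ∈ Submodule.span ℤ {f : G → ℂ | IsChar f}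

/-- A generalised character has trivial determinant: writing `f = χ_V - χ_W`,
`det V ⊗ conj (det W)` is the trivial character. -/
def HasTrivialDet {G : Type} [Group G] (f : G → ℂ) : Prop :=
  ∃ V W : FDRep ℂ G, f = V.character - W.character ∧
    ∀ g, detRep V g * starRingEnd ℂ (detRep W g) = 1

/-- A permutation character: a `ℤ`-linear combination of characters `Ind_H^G 1_H`. -/
def IsPermChar {G : Type} [Group G] [Fintype G] (f : G → ℂ) : Prop :=
  f ∈ Submodule.span ℤ {f : G → ℂ | ∃ H : Subgroup G, f = indChar H 1}

/-- `𝒮_G`: permutation characters of `G` of degree `0` and trivial determinant. -/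
def SG (G : Type) [Group G] [Fintype G] : Set (G → ℂ) :=
  {f | IsPermChar f ∧ f 1 = 0 ∧ HasTrivialDet f}

/-- `Q` is isomorphic to `C₂ × C₂`, to `D₈`, or to `D_{2p}` for an odd prime `p`
(`DihedralGroup m` is the dihedral group of order `2m`). -/
def IsTargetGroup (Q : Type) [Group Q] : Prop :=
  Nonempty (Q ≃* Multiplicative (ZMod 2 × ZMod 2)) ∨ Nonempty (Q ≃* DihedralGroup 4) ∨
    ∃ p : ℕ, Odd p ∧ p.Prime ∧ Nonempty (Q ≃* DihedralGroup p)

/-- `𝒫_G`: the smallest set of generalised characters of `G` containing `τ + τ̄` for every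
generalised character `τ` of degree 0, containing `Ind_H^G (τ - 1 - det τ)` for every degree-2
character `τ` of a subgroup `H` factoring through a quotient of `H` isomorphic to `C₂ × C₂`,
`D₈` or `D_{2p}` (`p` an odd prime), and closed under `ℤ`-linear combinations. -/
inductive memP (G : Type) [Group G] [Fintype G] : (G → ℂ) → Prop
  | conj_add (τ : G → ℂ) (hτ : IsGenChar τ) (hdeg : τ 1 = 0) : memP G (τ + conjFun τ)
  | ind (H : Subgroup G) (N : Subgroup ↥H) [hN : N.Normal] (V : FDRep ℂ ↥H)
      (hdeg : V.character 1 = 2) (htarget : IsTargetGroup (↥H ⧸ N))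
      (hfactors : ∀ n : ↥H, n ∈ N → V.ρ n = 1) :
      memP G (indChar H (V.character - 1 - detRep V))
  | zero : memP G 0
  | add (f₁ f₂ : G → ℂ) (h₁ : memP G f₁) (h₂ : memP G f₂) : memP G (f₁ + f₂)
  | neg (f : G → ℂ) (h : memP G f) : memP G (-f)

/-- `𝒫_G` as a set. -/
def PG (G : Type) [Group G] [Fintype G] : Set (G → ℂ) := {f | memP G f}

end


section AuxBasic

open scoped Classical

variable {G : Type} [Group G] [Fintype G]

lemma indChar_add (H : Subgroup G) (f g : ↥H → ℂ) :
    indChar H (f + g) = indChar H f + indChar H g := by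
  funext x
  simp only [indChar, Pi.add_apply]
  rw [← mul_add, ← Finset.sum_add_distrib]
  congr 1
  refine Finset.sum_congr rfl fun y _ => ?_
  split_ifs with h <;> simp

lemma indChar_zsmul (H : Subgroup G) (n : ℤ) (f : ↥H → ℂ) :
    indChar H (n • f) = n • indChar H f := by
  funext x
  simp only [indChar, Pi.smul_apply, smul_eq_mul, zsmul_eq_mul]
  have h1 : (∑ y : G, if h : y⁻¹ * x * y ∈ H then (n : ℂ) * f ⟨y⁻¹ * x * y, h⟩ else 0)
      = (n : ℂ) * ∑ y : G, if h : y⁻¹ * x * y ∈ H then f ⟨y⁻¹ * x * y, h⟩ else 0 := by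
    rw [Finset.mul_sum]
    exact Finset.sum_congr rfl fun y _ => by split_ifs with h <;> simp
  rw [h1]
  ring

lemma indChar_zero (H : Subgroup G) : indChar H (0 : ↥H → ℂ) = 0 := by
  funext x
  simp [indChar]

lemma indChar_neg (H : Subgroup G) (f : ↥H → ℂ) : indChar H (-f) = -indChar H f := by
  have := indChar_zsmul H (-1) f
  simpa using this

lemma indChar_conjFun (H : Subgroup G) (f : ↥H → ℂ) :
    indChar H (conjFun f) = conjFun (indChar H f) := by
  funext x
  simp only [indChar, conjFun, map_mul, map_inv₀, map_natCast, map_sum]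
  congr 1
  refine Finset.sum_congr rfl fun y _ => ?_
  split_ifs with h <;> simp

lemma indChar_one_eq_zero (H : Subgroup G) (f : ↥H → ℂ) (hf : f 1 = 0) :
    indChar H f 1 = 0 := by
  have h0 : ∀ x : G, (if h : x⁻¹ * 1 * x ∈ H then f ⟨x⁻¹ * 1 * x, h⟩ else 0) = 0 := by
    intro x
    have hx : x⁻¹ * 1 * x ∈ H := by
      have : x⁻¹ * 1 * x = 1 := by group
      rw [this]; exact H.one_mem
    rw [dif_pos hx]
    have : (⟨x⁻¹ * 1 * x, hx⟩ : ↥H) = 1 := by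
      apply Subtype.ext; simp
    rw [this, hf]
  simp only [indChar, h0, Finset.sum_const_zero, mul_zero]

end AuxBasic

section AuxInduced

open scoped Classical

variable {G : Type} [Group G] [Fintype G]

lemma sec_mem (H : Subgroup G) (g : G) (q : G ⧸ H) :
    q.out⁻¹ * g * (g⁻¹ • q).out ∈ H := by
  have h1 : ((g⁻¹ * q.out : G) : G ⧸ H) = ((g⁻¹ • q).out : G ⧸ H) := by
    rw [QuotientGroup.out_eq']
    calc ((g⁻¹ * q.out : G) : G ⧸ H) = g⁻¹ • (q.out : G ⧸ H) := rfl
      _ = g⁻¹ • q := by rw [QuotientGroup.out_eq']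
  have h2 := QuotientGroup.eq.mp h1
  simpa [mul_inv_rev, mul_assoc] using h2

/-- The `H`-element carrying the twist of the induced representation. -/
noncomputable def hfun (H : Subgroup G) (g : G) (q : G ⧸ H) : ↥H :=
  ⟨q.out⁻¹ * g * (g⁻¹ • q).out, sec_mem H g q⟩

/-- The induced representation of `V` from `H` to `G`, modelled on `(G ⧸ H) → V`. -/
noncomputable def indRep (H : Subgroup G) (V : FDRep ℂ ↥H) :
    Representation ℂ G ((G ⧸ H) → V) where
  toFun g :=
    { toFun := fun f q => V.ρ (hfun H g q) (f (g⁻¹ • q))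
      map_add' := fun f₁ f₂ => funext fun q => by simp
      map_smul' := fun c f => funext fun q => by simp }
  map_one' := by
    apply LinearMap.ext; intro f; funext q
    show V.ρ (hfun H 1 q) (f ((1 : G)⁻¹ • q)) = f q
    have e1 : (1 : G)⁻¹ • q = q := by simp
    have e2 : hfun H 1 q = 1 := by
      apply Subtype.ext
      simp [hfun, e1]
    rw [e1, e2, map_one]
    rfl
  map_mul' g₁ g₂ := by
    apply LinearMap.ext; intro f; funext q
    show V.ρ (hfun H (g₁ * g₂) q) (f ((g₁ * g₂)⁻¹ • q)) =
      V.ρ (hfun H g₁ q) (V.ρ (hfun H g₂ (g₁⁻¹ • q)) (f (g₂⁻¹ • g₁⁻¹ • q)))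
    have e1 : (g₁ * g₂)⁻¹ • q = g₂⁻¹ • g₁⁻¹ • q := by rw [mul_inv_rev, mul_smul]
    have e2 : hfun H (g₁ * g₂) q = hfun H g₁ q * hfun H g₂ (g₁⁻¹ • q) := by
      apply Subtype.ext
      show q.out⁻¹ * (g₁ * g₂) * ((g₁ * g₂)⁻¹ • q).out =
        (q.out⁻¹ * g₁ * (g₁⁻¹ • q).out) * ((g₁⁻¹ • q).out⁻¹ * g₂ * (g₂⁻¹ • g₁⁻¹ • q).out)
      rw [e1]
      group
    rw [e1, e2, map_mul]
    rfl

/-- The induced representation as an `FDRep`. -/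
noncomputable def indFDRep (H : Subgroup G) (V : FDRep ℂ ↥H) : FDRep ℂ G :=
  FDRep.of (indRep H V)

end AuxInduced

section AuxChar

open scoped Classical

variable {G : Type} [Group G] [Fintype G]

/-- The equivalence `(G ⧸ H) × H ≃ G` given by `(q, y) ↦ q.out * y`. -/
noncomputable def cosetEquiv (H : Subgroup G) : (G ⧸ H) × ↥H ≃ G where
  toFun p := p.1.out * (p.2 : G)
  invFun x := ⟨(x : G ⧸ H),
    ⟨((x : G ⧸ H) : G ⧸ H).out⁻¹ * x, by
      have := QuotientGroup.eq.mp (QuotientGroup.out_eq' (x : G ⧸ H))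
      exact this⟩⟩
  left_inv p := by
    obtain ⟨q, y⟩ := p
    have hq : ((q.out * (y : G) : G) : G ⧸ H) = q := by
      rw [QuotientGroup.mk_mul_of_mem q.out y.2, QuotientGroup.out_eq']
    refine Prod.ext hq (Subtype.ext ?_)
    show ((q.out * (y : G) : G) : G ⧸ H).out⁻¹ * (q.out * (y : G)) = (y : G)
    rw [hq, inv_mul_cancel_left]
  right_inv x := by
    show ((x : G ⧸ H)).out * (((x : G ⧸ H)).out⁻¹ * x) = x
    rw [mul_inv_cancel_left]

lemma indChar_eq_sum_quot (H : Subgroup G) (V : FDRep ℂ ↥H) (g : G) :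
    indChar H V.character g =
      ∑ q : G ⧸ H, (if g⁻¹ • q = q then V.character (hfun H g q) else 0) := by
  classical
  have key : ∀ (q : G ⧸ H) (y : ↥H),
      (if h : (q.out * (y : G))⁻¹ * g * (q.out * (y : G)) ∈ H then
        V.character ⟨(q.out * (y : G))⁻¹ * g * (q.out * (y : G)), h⟩ else 0)
      = (if g⁻¹ • q = q then V.character (hfun H g q) else 0) := by
    intro q y
    set a : G := q.out⁻¹ * g * q.out with ha
    have hx : (q.out * (y : G))⁻¹ * g * (q.out * (y : G)) = (y : G)⁻¹ * a * (y : G) := by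
      rw [ha]; group
    have hmemiff : (q.out * (y : G))⁻¹ * g * (q.out * (y : G)) ∈ H ↔ a ∈ H := by
      rw [hx, H.mul_mem_cancel_right y.2, H.mul_mem_cancel_left (H.inv_mem y.2)]
    have hq_iff : a ∈ H ↔ g⁻¹ • q = q := by
      have h1 : g⁻¹ • q = ((g⁻¹ * q.out : G) : G ⧸ H) := by
        conv_lhs => rw [← QuotientGroup.out_eq' q]
        exact MulAction.Quotient.smul_mk H g⁻¹ q.out
      rw [h1]
      conv_rhs => rw [← QuotientGroup.out_eq' q]
      rw [QuotientGroup.eq]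
      constructor
      · intro h; rw [ha] at h; simpa [mul_inv_rev, mul_assoc, inv_inv] using h
      · intro h; rw [ha]; simpa [mul_inv_rev, mul_assoc, inv_inv] using h
    by_cases hcond : g⁻¹ • q = q
    · have haH : a ∈ H := hq_iff.mpr hcond
      have hxH : (q.out * (y : G))⁻¹ * g * (q.out * (y : G)) ∈ H := hmemiff.mpr haH
      rw [dif_pos hxH, if_pos hcond]
      have e3 : (⟨(q.out * (y : G))⁻¹ * g * (q.out * (y : G)), hxH⟩ : ↥H)
          = y⁻¹ * ⟨a, haH⟩ * y := by
        apply Subtype.ext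
        simpa using hx
      have e4 : hfun H g q = ⟨a, haH⟩ := by
        apply Subtype.ext
        simp [hfun, hcond, ha]
      rw [e3, e4]
      have hcc := FDRep.char_conj V (⟨a, haH⟩ : ↥H) y⁻¹
      rw [inv_inv] at hcc
      exact hcc
    · have : ¬((q.out * (y : G))⁻¹ * g * (q.out * (y : G)) ∈ H) := fun hc =>
        hcond (hq_iff.mp (hmemiff.mp hc))
      rw [dif_neg this, if_neg hcond]
  have hsum : (∑ x : G, if h : x⁻¹ * g * x ∈ H then V.character ⟨x⁻¹ * g * x, h⟩ else 0)
      = ∑ p : (G ⧸ H) × ↥H,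
          if h : ((cosetEquiv H) p)⁻¹ * g * ((cosetEquiv H) p) ∈ H then
            V.character ⟨((cosetEquiv H) p)⁻¹ * g * ((cosetEquiv H) p), h⟩ else 0 :=
    (Equiv.sum_comp (cosetEquiv H)
      (fun x => if h : x⁻¹ * g * x ∈ H then V.character ⟨x⁻¹ * g * x, h⟩ else 0)).symm
  rw [indChar, hsum, Fintype.sum_prod_type]
  have : ∀ q : G ⧸ H, (∑ y : ↥H,
      if h : ((cosetEquiv H) (q, y))⁻¹ * g * ((cosetEquiv H) (q, y)) ∈ H then
        V.character ⟨((cosetEquiv H) (q, y))⁻¹ * g * ((cosetEquiv H) (q, y)), h⟩ else 0)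
      = (Nat.card ↥H : ℂ) * (if g⁻¹ • q = q then V.character (hfun H g q) else 0) := by
    intro q
    have : ∀ y : ↥H,
        (if h : ((cosetEquiv H) (q, y))⁻¹ * g * ((cosetEquiv H) (q, y)) ∈ H then
          V.character ⟨((cosetEquiv H) (q, y))⁻¹ * g * ((cosetEquiv H) (q, y)), h⟩ else 0)
        = (if g⁻¹ • q = q then V.character (hfun H g q) else 0) := fun y => key q y
    rw [Finset.sum_congr rfl fun y _ => this y, Finset.sum_const, Nat.card_eq_fintype_card]
    simp [mul_comm]
  rw [Finset.sum_congr rfl fun q _ => this q, ← Finset.mul_sum, ← mul_assoc]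
  have hcard : ((Nat.card ↥H : ℂ))⁻¹ * (Nat.card ↥H : ℂ) = 1 := by
    rw [inv_mul_cancel₀]
    exact_mod_cast Nat.card_pos.ne'
  rw [hcard, one_mul]

end AuxChar

section AuxTrace

open scoped Classical

variable {G : Type} [Group G] [Fintype G]

lemma character_as_sum (H : Subgroup G) (V : FDRep ℂ ↥H) (z : ↥H) :
    V.character z = ∑ i, (Module.finBasis ℂ V).repr (V.ρ z (Module.finBasis ℂ V i)) i := by
  classical
  rw [FDRep.character, LinearMap.trace_eq_matrix_trace ℂ (Module.finBasis ℂ V), Matrix.trace]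
  refine Finset.sum_congr rfl fun i _ => ?_
  rw [Matrix.diag_apply, LinearMap.toMatrix_apply]

lemma indFDRep_char (H : Subgroup G) (V : FDRep ℂ ↥H) (g : G) :
    (indFDRep H V).character g = indChar H V.character g := by
  classical
  rw [indChar_eq_sum_quot]
  have h0 : (indFDRep H V).character g
      = LinearMap.trace ℂ ((G ⧸ H) → V) (indRep H V g) := rfl
  rw [h0]
  set b := Module.finBasis ℂ V with hb
  set B := Pi.basis (fun _ : G ⧸ H => b) with hB
  rw [LinearMap.trace_eq_matrix_trace ℂ B, Matrix.trace]
  rw [← Finset.univ_sigma_univ, Finset.sum_sigma]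
  refine Finset.sum_congr rfl fun q _ => ?_
  have diag : ∀ i, Matrix.diag (LinearMap.toMatrix B B (indRep H V g)) ⟨q, i⟩
      = b.repr (V.ρ (hfun H g q) ((Pi.single q (b i) : (G ⧸ H) → V) (g⁻¹ • q))) i := by
    intro i
    rw [Matrix.diag_apply, LinearMap.toMatrix_apply, hB, Pi.basis_apply, Pi.basis_repr]
    rfl
  rw [Finset.sum_congr rfl fun i _ => diag i]
  by_cases hq : g⁻¹ • q = q
  · rw [if_pos hq]
    have : ∀ i, b.repr (V.ρ (hfun H g q) ((Pi.single q (b i) : (G ⧸ H) → V) (g⁻¹ • q))) i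
        = b.repr (V.ρ (hfun H g q) (b i)) i := by
      intro i
      rw [hq, Pi.single_eq_same]
    rw [Finset.sum_congr rfl fun i _ => this i, character_as_sum]
  · rw [if_neg hq]
    refine Finset.sum_eq_zero fun i _ => ?_
    rw [Pi.single_eq_of_ne hq]
    simp

end AuxTrace

section AuxGen

open scoped Classical

variable {G : Type} [Group G] [Fintype G]

lemma isGenChar_indChar (H : Subgroup G) (f : ↥H → ℂ) (hf : IsGenChar f) :
    IsGenChar (indChar H f) := by
  refine Submodule.span_induction
    (p := fun x _ => IsGenChar (indChar H x)) ?_ ?_ ?_ ?_ hf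
  · rintro x ⟨V, rfl⟩
    exact Submodule.subset_span ⟨indFDRep H V, funext fun g => indFDRep_char H V g⟩
  · show IsGenChar (indChar H 0)
    rw [indChar_zero]
    exact Submodule.zero_mem _
  · intro x y _ _ hx hy
    show IsGenChar (indChar H (x + y))
    rw [indChar_add]
    exact Submodule.add_mem _ hx hy
  · intro n x _ hx
    show IsGenChar (indChar H (n • x))
    rw [indChar_zsmul]
    exact Submodule.smul_mem _ n hx

lemma isTargetGroup_of_mulEquiv {Q Q' : Type} [Group Q] [Group Q'] (e : Q ≃* Q')
    (h : IsTargetGroup Q) : IsTargetGroup Q' := by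
  rcases h with ⟨⟨φ⟩⟩ | ⟨⟨φ⟩⟩ | ⟨p, hp1, hp2, ⟨φ⟩⟩
  · exact Or.inl ⟨e.symm.trans φ⟩
  · exact Or.inr (Or.inl ⟨e.symm.trans φ⟩)
  · exact Or.inr (Or.inr ⟨p, hp1, hp2, ⟨e.symm.trans φ⟩⟩)

/-- Transitivity of induction of class functions. -/
lemma indChar_trans (H : Subgroup G) (K : Subgroup ↥H) (f : ↥K → ℂ) :
    indChar H (indChar K f) = indChar (K.map H.subtype)
      (fun x => f ((K.equivMapOfInjective H.subtype H.subtype_injective).symm x)) := by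
  classical
  set e := K.equivMapOfInjective H.subtype H.subtype_injective with he
  funext g
  simp only [indChar]
  set F : G → ↥H → ℂ := fun x y =>
    (if hx : x⁻¹ * g * x ∈ H then
      (if hk : y⁻¹ * (⟨x⁻¹ * g * x, hx⟩ : ↥H) * y ∈ K then
        f ⟨y⁻¹ * (⟨x⁻¹ * g * x, hx⟩ : ↥H) * y, hk⟩ else 0) else 0) with hF
  have hFT : ∀ (y : ↥H) (z : G), F (z * (y : G)⁻¹) y
      = (if h : z⁻¹ * g * z ∈ K.map H.subtype then f (e.symm ⟨z⁻¹ * g * z, h⟩) else 0) := by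
    intro y z
    simp only [hF]
    have hxval : (z * (y : G)⁻¹)⁻¹ * g * (z * (y : G)⁻¹)
        = (y : G) * (z⁻¹ * g * z) * (y : G)⁻¹ := by group
    have hmem1 : ((z * (y : G)⁻¹)⁻¹ * g * (z * (y : G)⁻¹) ∈ H) ↔ (z⁻¹ * g * z ∈ H) := by
      rw [hxval, H.mul_mem_cancel_right (H.inv_mem y.2), H.mul_mem_cancel_left y.2]
    by_cases hzH : z⁻¹ * g * z ∈ H
    · have hx : (z * (y : G)⁻¹)⁻¹ * g * (z * (y : G)⁻¹) ∈ H := hmem1.mpr hzH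
      rw [dif_pos hx]
      have hyx : y⁻¹ * (⟨(z * (y : G)⁻¹)⁻¹ * g * (z * (y : G)⁻¹), hx⟩ : ↥H) * y
          = ⟨z⁻¹ * g * z, hzH⟩ := by
        apply Subtype.ext
        show (y : G)⁻¹ * ((z * (y : G)⁻¹)⁻¹ * g * (z * (y : G)⁻¹)) * (y : G) = z⁻¹ * g * z
        rw [hxval]; group
      rw [hyx]
      have hmem2 : ((⟨z⁻¹ * g * z, hzH⟩ : ↥H) ∈ K) ↔ z⁻¹ * g * z ∈ K.map H.subtype := by
        constructor
        · intro hk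
          exact ⟨⟨z⁻¹ * g * z, hzH⟩, hk, rfl⟩
        · rintro ⟨k, hk, hkeq⟩
          have : k = ⟨z⁻¹ * g * z, hzH⟩ := Subtype.ext hkeq
          rwa [this] at hk
      by_cases hk : (⟨z⁻¹ * g * z, hzH⟩ : ↥H) ∈ K
      · have hk' : z⁻¹ * g * z ∈ K.map H.subtype := hmem2.mp hk
        rw [dif_pos hk, dif_pos hk']
        congr 1
        rw [MulEquiv.eq_symm_apply]
        apply Subtype.ext
        rw [he, Subgroup.coe_equivMapOfInjective_apply]
        rfl
      · rw [dif_neg hk, dif_neg (fun hc => hk (hmem2.mpr hc))]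
    · have hx : ¬((z * (y : G)⁻¹)⁻¹ * g * (z * (y : G)⁻¹) ∈ H) := fun hc => hzH (hmem1.mp hc)
      rw [dif_neg hx]
      have : ¬(z⁻¹ * g * z ∈ K.map H.subtype) := by
        intro hc
        rcases hc with ⟨k, _, hkeq⟩
        exact hzH (hkeq ▸ (k : ↥H).2)
      rw [dif_neg this]
  have hD : ∀ x : G, (if hx : x⁻¹ * g * x ∈ H then
        (Nat.card ↥K : ℂ)⁻¹ * ∑ y : ↥H,
          (if hk : y⁻¹ * (⟨x⁻¹ * g * x, hx⟩ : ↥H) * y ∈ K then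
            f ⟨y⁻¹ * (⟨x⁻¹ * g * x, hx⟩ : ↥H) * y, hk⟩ else 0) else 0)
      = (Nat.card ↥K : ℂ)⁻¹ * ∑ y : ↥H, F x y := by
    intro x
    by_cases hx : x⁻¹ * g * x ∈ H
    · rw [dif_pos hx]
      congr 1
      refine Finset.sum_congr rfl fun y _ => ?_
      simp only [hF]
      rw [dif_pos hx]
    · rw [dif_neg hx]
      have h0 : ∀ y : ↥H, F x y = 0 := fun y => by simp only [hF]; rw [dif_neg hx]
      rw [Finset.sum_congr rfl fun y _ => h0 y, Finset.sum_const_zero, mul_zero]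
  rw [Finset.sum_congr rfl fun x _ => hD x, ← Finset.mul_sum]
  have hswap : (∑ x : G, ∑ y : ↥H, F x y) = (Fintype.card ↥H) •
      ∑ z : G, (if h : z⁻¹ * g * z ∈ K.map H.subtype then f (e.symm ⟨z⁻¹ * g * z, h⟩) else 0) := by
    rw [Finset.sum_comm]
    have hinner : ∀ y : ↥H, (∑ x : G, F x y) = ∑ z : G,
        (if h : z⁻¹ * g * z ∈ K.map H.subtype then f (e.symm ⟨z⁻¹ * g * z, h⟩) else 0) := by
      intro y
      exact (Fintype.sum_bijective (fun z : G => z * (y : G)⁻¹)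
        (Equiv.mulRight ((y : G))⁻¹).bijective _ _ (fun z => (hFT y z).symm)).symm
    rw [Finset.sum_congr rfl fun y _ => hinner y, Finset.sum_const, Finset.card_univ]
  rw [hswap]
  have hcards : Nat.card ↥(K.map H.subtype) = Nat.card ↥K := (Nat.card_congr e.toEquiv).symm
  rw [hcards, nsmul_eq_mul, ← Nat.card_eq_fintype_card]
  have h1 : (Nat.card ↥H : ℂ) ≠ 0 := by
    exact_mod_cast Nat.card_pos.ne'
  have h2 : (Nat.card ↥K : ℂ) ≠ 0 := by
    exact_mod_cast Nat.card_pos.ne'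
  field_simp

end AuxGen

section AuxFinal

open scoped Classical

variable {G : Type} [Group G] [Fintype G]

lemma ind_case (H : Subgroup G) (K : Subgroup ↥H) (N : Subgroup ↥K) [hN : N.Normal]
    (V : FDRep ℂ ↥K) (hdeg : V.character 1 = 2) (htarget : IsTargetGroup (↥K ⧸ N))
    (hfactors : ∀ n : ↥K, n ∈ N → V.ρ n = 1) :
    memP G (indChar H (indChar K (V.character - 1 - detRep V))) := by
  classical
  let e : ↥K ≃* ↥(K.map H.subtype) := K.equivMapOfInjective H.subtype H.subtype_injective
  let V' : FDRep ℂ ↥(K.map H.subtype) := FDRep.of (V.ρ.comp e.symm.toMonoidHom)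
  have hchar : ∀ x : ↥(K.map H.subtype), V'.character x = V.character (e.symm x) := fun x => rfl
  have hdet : ∀ x : ↥(K.map H.subtype), detRep V' x = detRep V (e.symm x) := fun x => rfl
  have hfun1 : (fun x : ↥(K.map H.subtype) => (V.character - 1 - detRep V) (e.symm x))
      = V'.character - 1 - detRep V' := by
    funext x
    simp only [Pi.sub_apply, Pi.one_apply, hchar, hdet]
  haveI hN'norm : (N.map (e : ↥K →* ↥(K.map H.subtype))).Normal := hN.map _ e.surjective
  have htarget' : IsTargetGroup (↥(K.map H.subtype) ⧸ N.map (e : ↥K →* ↥(K.map H.subtype))) :=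
    isTargetGroup_of_mulEquiv (QuotientGroup.congr N _ e rfl) htarget
  have hdeg' : V'.character 1 = 2 := by
    rw [hchar 1, map_one]
    exact hdeg
  have hfactors' : ∀ n' : ↥(K.map H.subtype),
      n' ∈ N.map (e : ↥K →* ↥(K.map H.subtype)) → V'.ρ n' = 1 := by
    rintro _ ⟨n, hn, rfl⟩
    show V.ρ (e.symm (e n)) = 1
    rw [e.symm_apply_apply]
    exact hfactors n hn
  have hmem := memP.ind (G := G) (K.map H.subtype)
    (N.map (e : ↥K →* ↥(K.map H.subtype))) V' hdeg' htarget' hfactors'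
  rw [indChar_trans H K (V.character - 1 - detRep V), hfun1]
  exact hmem

end AuxFinal

/-- **Lemma 2.2(2).** If `H ≤ G` and `ρ ∈ 𝒫_H`, then `Ind_H^G ρ ∈ 𝒫_G`. -/
theorem statement4 (G : Type) [Group G] [Fintype G] (H : Subgroup G) (ρ : ↥H → ℂ)
    (hρ : ρ ∈ PG ↥H) : indChar H ρ ∈ PG G := by
  have hm : memP ↥H ρ := hρ
  clear hρ
  show memP G (indChar H ρ)
  induction hm with
  | conj_add τ hτ hdeg =>
    rw [indChar_add, indChar_conjFun]
    exact memP.conj_add _ (isGenChar_indChar H τ hτ) (indChar_one_eq_zero H τ hdeg)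
  | @ind K N hN V hdeg htarget hfactors =>
    exact ind_case H K N V hdeg htarget hfactors
  | zero =>
    rw [indChar_zero]
    exact memP.zero
  | add f₁ f₂ h₁ h₂ ih₁ ih₂ =>
    rw [indChar_add]
    exact memP.add _ _ ih₁ ih₂
  | neg f h ih =>
    rw [indChar_neg]
    exact memP.neg _ ih
end

section
/- Let G be a finite group and N ◁ G a normal subgroup. Then the inflation to G of any element of 𝒮_{G/N} lies in 𝒮_G, and the inflation to G of any element of 𝒫_{G/N} lies in 𝒫_G. -/
open scoped Classical

/-- Pullback of a representation along a group homomorphism. -/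
noncomputable def pullRep {G₁ G₂ : Type} [Group G₁] [Group G₂] (φ : G₁ →* G₂) (V : FDRep ℂ G₂) : FDRep ℂ G₁ :=
  FDRep.of ((FDRep.ρ V).comp φ)

section Aux
variable {G : Type} [Group G] [Fintype G] (N : Subgroup G) [N.Normal]

lemma fiber_card (y : G ⧸ N) : Fintype.card {x : G // QuotientGroup.mk x = y} = Nat.card N := by
  obtain ⟨g₀, rfl⟩ := QuotientGroup.mk_surjective y
  rw [Nat.card_eq_fintype_card]
  apply Fintype.card_congr
  refine ⟨fun x => ⟨g₀⁻¹ * x.1, ?_⟩, fun n => ⟨g₀ * n.1, ?_⟩, ?_, ?_⟩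
  · have := QuotientGroup.eq.mp x.2.symm
    simpa using this
  · have : (g₀ : G ⧸ N) = QuotientGroup.mk g₀ := rfl
    rw [eq_comm, QuotientGroup.eq]
    simpa using n.2
  · intro x; ext; simp
  · intro n; ext; simp

lemma sum_comp_mk (F : G ⧸ N → ℂ) :
    ∑ x : G, F (QuotientGroup.mk x) = (Nat.card N : ℂ) * ∑ y : G ⧸ N, F y := by
  rw [← Fintype.sum_fiberwise (QuotientGroup.mk : G → G ⧸ N) (fun x => F (QuotientGroup.mk x))]
  rw [Finset.mul_sum]
  refine Finset.sum_congr rfl fun y _ => ?_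
  have : ∀ x : {x : G // QuotientGroup.mk x = y}, F (QuotientGroup.mk x.1) = F y := fun x => by rw [x.2]
  rw [Finset.sum_congr rfl fun x _ => this x, Finset.sum_const, Finset.card_univ, fiber_card,
    nsmul_eq_mul]

lemma card_comap (H : Subgroup (G ⧸ N)) :
    (Nat.card (H.comap (QuotientGroup.mk' N)) : ℂ) = (Nat.card N : ℂ) * (Nat.card H : ℂ) := by
  have h1 : ∑ x : G, (if QuotientGroup.mk x ∈ H then (1:ℂ) else 0)
      = (Nat.card N : ℂ) * ∑ y : G ⧸ N, (if y ∈ H then (1:ℂ) else 0) := by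
    exact sum_comp_mk N (fun y => if y ∈ H then (1:ℂ) else 0)
  have h2 : ∑ x : G, (if QuotientGroup.mk x ∈ H then (1:ℂ) else 0)
      = (Nat.card (H.comap (QuotientGroup.mk' N)) : ℂ) := by
    rw [Finset.sum_boole, Nat.card_eq_fintype_card, Fintype.card_subtype]
    norm_cast
  have h3 : ∑ y : G ⧸ N, (if y ∈ H then (1:ℂ) else 0) = (Nat.card H : ℂ) := by
    rw [Finset.sum_boole, Nat.card_eq_fintype_card, Fintype.card_subtype]
  rw [← h3, ← h1, h2]

lemma indChar_comap (H : Subgroup (G ⧸ N)) (f : ↥H → ℂ) (g : G) :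
    indChar (H.comap (QuotientGroup.mk' N)) (fun h => f ⟨QuotientGroup.mk h.1, h.2⟩) g
      = indChar H f (QuotientGroup.mk g) := by
  unfold indChar
  set F : G ⧸ N → ℂ := fun y =>
    if h : y⁻¹ * QuotientGroup.mk g * y ∈ H then f ⟨y⁻¹ * QuotientGroup.mk g * y, h⟩ else 0
    with hF
  have key : ∀ x : G,
      (if h : x⁻¹ * g * x ∈ H.comap (QuotientGroup.mk' N) then
        f ⟨QuotientGroup.mk (x⁻¹ * g * x), h⟩ else 0) = F (QuotientGroup.mk x) := fun x => rfl
  calc (Nat.card (H.comap (QuotientGroup.mk' N)) : ℂ)⁻¹ *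
        ∑ x : G, (if h : x⁻¹ * g * x ∈ H.comap (QuotientGroup.mk' N) then
          f ⟨QuotientGroup.mk (x⁻¹ * g * x), h⟩ else 0)
      = (Nat.card (H.comap (QuotientGroup.mk' N)) : ℂ)⁻¹ * ∑ x : G, F (QuotientGroup.mk x) := by
        rw [Finset.sum_congr rfl fun x _ => key x]
    _ = ((Nat.card N : ℂ) * (Nat.card H : ℂ))⁻¹ * ((Nat.card N : ℂ) * ∑ y : G ⧸ N, F y) := by
        rw [card_comap, sum_comp_mk]
    _ = (Nat.card H : ℂ)⁻¹ * ∑ y : G ⧸ N, F y := by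
        have hN : (Nat.card N : ℂ) ≠ 0 := by
          simp [Nat.card_eq_fintype_card, Fintype.card_ne_zero]
        field_simp

lemma isChar_infl {f : G ⧸ N → ℂ} (hf : IsChar f) :
    IsChar (fun g : G => f (QuotientGroup.mk g)) := by
  obtain ⟨V, rfl⟩ := hf
  exact ⟨pullRep (QuotientGroup.mk' N) V, rfl⟩

lemma isGenChar_infl {f : G ⧸ N → ℂ} (hf : IsGenChar f) :
    IsGenChar (fun g : G => f (QuotientGroup.mk g)) := by
  refine Submodule.span_induction ?_ ?_ ?_ ?_ hf
  · exact fun x hx => Submodule.subset_span (isChar_infl N hx)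
  · exact Submodule.zero_mem _
  · intro x y _ _ hx hy
    exact Submodule.add_mem _ hx hy
  · intro a x _ hx
    exact Submodule.smul_mem _ a hx

lemma isPermChar_infl {f : G ⧸ N → ℂ} (hf : IsPermChar f) :
    IsPermChar (fun g : G => f (QuotientGroup.mk g)) := by
  refine Submodule.span_induction ?_ ?_ ?_ ?_ hf
  · rintro x ⟨H, rfl⟩
    refine Submodule.subset_span ⟨H.comap (QuotientGroup.mk' N), ?_⟩
    funext g
    exact (indChar_comap N H 1 g).symm
  · exact Submodule.zero_mem _
  · intro x y _ _ hx hy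
    exact Submodule.add_mem _ hx hy
  · intro a x _ hx
    exact Submodule.smul_mem _ a hx

lemma hasTrivialDet_infl {f : G ⧸ N → ℂ} (hf : HasTrivialDet f) :
    HasTrivialDet (fun g : G => f (QuotientGroup.mk g)) := by
  obtain ⟨V, W, hVW, hdet⟩ := hf
  refine ⟨pullRep (QuotientGroup.mk' N) V, pullRep (QuotientGroup.mk' N) W, ?_, ?_⟩
  · funext g
    exact congrFun hVW (QuotientGroup.mk g)
  · exact fun g => hdet (QuotientGroup.mk g)

lemma isTargetGroup_congr {Q Q' : Type} [Group Q] [Group Q'] (e : Q' ≃* Q)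
    (h : IsTargetGroup Q) : IsTargetGroup Q' := by
  rcases h with i | i | ⟨p, hp1, hp2, i⟩
  · exact Or.inl (i.map e.trans)
  · exact Or.inr (Or.inl (i.map e.trans))
  · exact Or.inr (Or.inr ⟨p, hp1, hp2, i.map e.trans⟩)

end Aux

/-- **Lemma 2.2(3).** If `N ◁ G` then the inflation to `G` of any element of `𝒮_{G/N}`
lies in `𝒮_G`, and the inflation to `G` of any element of `𝒫_{G/N}` lies in `𝒫_G`. -/
theorem statement5 (G : Type) [Group G] [Fintype G] (N : Subgroup G) [N.Normal] :
    (∀ f ∈ SG (G ⧸ N), (fun g : G => f (QuotientGroup.mk g)) ∈ SG G) ∧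
    (∀ f ∈ PG (G ⧸ N), (fun g : G => f (QuotientGroup.mk g)) ∈ PG G) := by
  constructor
  · rintro f ⟨hperm, hdeg, hdet⟩
    exact ⟨isPermChar_infl N hperm, hdeg, hasTrivialDet_infl N hdet⟩
  · intro f hf
    induction hf with
    | conj_add τ hτ hdeg =>
        exact memP.conj_add (fun g => τ (QuotientGroup.mk g)) (isGenChar_infl N hτ) hdeg
    | @ind H N₀ hN V hdeg htarget hfactors =>
        set φ : ↥(H.comap (QuotientGroup.mk' N)) →* ↥H :=
          (QuotientGroup.mk' N).subgroupComap H with hφdef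
        haveI : (N₀.comap φ).Normal := hN.comap φ
        have hsurj : Function.Surjective φ := by
          rintro ⟨y, hy⟩
          obtain ⟨x, rfl⟩ := QuotientGroup.mk_surjective y
          exact ⟨⟨x, hy⟩, rfl⟩
        have hψs : Function.Surjective ((QuotientGroup.mk' N₀).comp φ) :=
          (QuotientGroup.mk'_surjective N₀).comp hsurj
        have hker : ((QuotientGroup.mk' N₀).comp φ).ker = N₀.comap φ := by
          rw [← MonoidHom.comap_ker, QuotientGroup.ker_mk']
        have e : ↥(H.comap (QuotientGroup.mk' N)) ⧸ (N₀.comap φ) ≃* ↥H ⧸ N₀ :=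
          (QuotientGroup.quotientMulEquivOfEq hker.symm).trans
            (QuotientGroup.quotientKerEquivOfSurjective _ hψs)
        have htarget' : IsTargetGroup (↥(H.comap (QuotientGroup.mk' N)) ⧸ (N₀.comap φ)) :=
          isTargetGroup_congr e htarget
        have hdeg' : (pullRep φ V).character 1 = 2 := by
          show V.character (φ 1) = 2
          rw [map_one]; exact hdeg
        have hfactors' : ∀ n, n ∈ N₀.comap φ → (pullRep φ V).ρ n = 1 :=
          fun n hn => hfactors (φ n) hn
        have heq : (fun g : G =>
            indChar H (V.character - 1 - detRep V) (QuotientGroup.mk g)) =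
            indChar (H.comap (QuotientGroup.mk' N))
              ((pullRep φ V).character - 1 - detRep (pullRep φ V)) := by
          funext g
          rw [← indChar_comap N H (V.character - 1 - detRep V) g]
          rfl
        rw [heq]
        exact memP.ind (H.comap (QuotientGroup.mk' N)) (N₀.comap φ) (pullRep φ V)
          hdeg' htarget' hfactors'
    | zero => exact memP.zero
    | add f₁ f₂ h₁ h₂ ih₁ ih₂ => exact memP.add _ _ ih₁ ih₂
    | neg f h ih => exact memP.neg _ ih
end

section
/- Let G be a finite group, H ≤ G a subgroup, and τ a character of a finite-dimensional complex representation of H with trivial determinant and even degree. Then the induced character Ind_H^G τ has trivial determinant. -/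
open scoped Classical

noncomputable section Statement7Aux

namespace Statement7Aux

open Module

variable {G : Type} [Group G] [Fintype G] (H : Subgroup G)

/-- The `H`-valued cocycle attached to the section `Quotient.out` of `G ⧸ H`. -/
def hh (g : G) (c : G ⧸ H) : ↥H :=
  ⟨(g • c).out⁻¹ * g * c.out, by
    have h1 : (QuotientGroup.mk ((g • c).out) : G ⧸ H) = QuotientGroup.mk (g * c.out) := by
      rw [QuotientGroup.out_eq', ← smul_eq_mul, MulAction.Quotient.mk_smul_out]
    simpa [mul_assoc] using QuotientGroup.eq.mp h1⟩

lemma hh_mul (g g' : G) (c : G ⧸ H) : hh H g (g' • c) * hh H g' c = hh H (g * g') c := by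
  apply Subtype.ext
  show ((g • g' • c).out⁻¹ * g * (g' • c).out) * ((g' • c).out⁻¹ * g' * c.out)
      = ((g * g') • c).out⁻¹ * (g * g') * c.out
  rw [mul_smul]
  group

lemma hh_one (c : G ⧸ H) : hh H 1 c = 1 := by
  apply Subtype.ext
  show (((1 : G) • c).out⁻¹ * 1 * c.out) = 1
  simp

variable (V : FDRep ℂ ↥H)

/-- A matrix model of `V`. -/
def B (s : ↥H) : Matrix (Fin (finrank ℂ V)) (Fin (finrank ℂ V)) ℂ :=
  LinearMap.toMatrix (finBasis ℂ V) (finBasis ℂ V) (V.ρ s)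

lemma B_mul (s t : ↥H) : B H V (s * t) = B H V s * B H V t := by
  rw [B, B, B, map_mul, LinearMap.toMatrix_mul]

lemma B_one : B H V 1 = 1 := by rw [B, map_one, LinearMap.toMatrix_one]

lemma trace_B (s : ↥H) : Matrix.trace (B H V s) = V.character s :=
  (LinearMap.trace_eq_matrix_trace ℂ (finBasis ℂ V) (V.ρ s)).symm

lemma det_B (hdet : ∀ h : ↥H, LinearMap.det (V.ρ h) = 1) (s : ↥H) : (B H V s).det = 1 := by
  rw [B, LinearMap.det_toMatrix]
  exact hdet s

variable [Fintype (G ⧸ H)]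

/-- The matrix of the induced representation at `g`. -/
def m (g : G) : Matrix (Fin (finrank ℂ V) × (G ⧸ H)) (Fin (finrank ℂ V) × (G ⧸ H)) ℂ :=
  fun p q => if g • q.2 = p.2 then B H V (hh H g q.2) p.1 q.1 else 0

lemma m_one : m H V 1 = 1 := by
  ext ⟨i, c⟩ ⟨j, c'⟩
  simp only [m, one_smul, hh_one, B_one, Matrix.one_apply, Prod.mk.injEq]
  by_cases h : c' = c
  · subst h; by_cases h2 : i = j <;> simp [h2]
  · have h' : ¬(c = c') := fun hc => h hc.symm
    simp [h, h']

lemma m_mul (g g' : G) : m H V (g * g') = m H V g * m H V g' := by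
  ext ⟨i, c⟩ ⟨j, c''⟩
  rw [Matrix.mul_apply, Fintype.sum_prod_type, Finset.sum_comm]
  have key : ∀ c' : G ⧸ H, (∑ k, m H V g (i, c) (k, c') * m H V g' (k, c') (j, c''))
      = if g' • c'' = c' then
          (if g • c' = c then ∑ k, B H V (hh H g c') i k * B H V (hh H g' c'') k j else 0)
        else 0 := by
    intro c'
    simp only [m]
    by_cases h1 : g' • c'' = c' <;> by_cases h2 : g • c' = c <;>
      simp [h1, h2, Finset.mul_sum, ite_mul, mul_ite]
  rw [Finset.sum_congr rfl fun c' _ => key c', Finset.sum_ite_eq Finset.univ (g' • c'')]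
  simp only [Finset.mem_univ, if_true]
  rw [← Matrix.mul_apply, ← B_mul, hh_mul, ← mul_smul]
  rfl

/-- The induced representation of `G` on `(Fin (finrank ℂ V) × (G ⧸ H)) → ℂ`. -/
def rhoA : Representation ℂ G ((Fin (finrank ℂ V) × (G ⧸ H)) → ℂ) where
  toFun g := Matrix.toLin' (m H V g)
  map_one' := by
    show Matrix.toLin' (m H V 1) = _
    rw [m_one, Matrix.toLin'_one]; rfl
  map_mul' g g' := by
    show Matrix.toLin' (m H V (g * g')) = Matrix.toLin' (m H V g) * Matrix.toLin' (m H V g')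
    rw [m_mul, Matrix.toLin'_mul]; rfl

lemma trace_rhoA (g : G) :
    LinearMap.trace ℂ _ (rhoA H V g) = ∑ c : G ⧸ H,
      (if g • c = c then V.character (hh H g c) else 0) := by
  show LinearMap.trace ℂ _ (Matrix.toLin' (m H V g)) = _
  rw [LinearMap.trace_eq_matrix_trace ℂ (Pi.basisFun ℂ _), LinearMap.toMatrix_eq_toMatrix',
    LinearMap.toMatrix'_toLin']
  rw [Matrix.trace, Fintype.sum_prod_type, Finset.sum_comm]
  refine Finset.sum_congr rfl fun c _ => ?_
  by_cases h : g • c = c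
  · simp only [Matrix.diag_apply, m, h, if_true, ← trace_B, Matrix.trace]
  · simp [Matrix.diag_apply, m, h]

lemma det_rhoA (hdet : ∀ h : ↥H, LinearMap.det (V.ρ h) = 1)
    (heven : Even (finrank ℂ V)) (g : G) : LinearMap.det (rhoA H V g) = 1 := by
  show LinearMap.det (Matrix.toLin' (m H V g)) = 1
  rw [LinearMap.det_toLin']
  set π : Equiv.Perm (Fin (finrank ℂ V) × (G ⧸ H)) :=
    Equiv.prodCongrRight fun _ : Fin (finrank ℂ V) =>
      (MulAction.toPerm (g⁻¹ : G) : Equiv.Perm (G ⧸ H)) with hπ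
  have hdecomp : m H V g =
      (π.permMatrix ℂ) * Matrix.blockDiagonal (fun c => B H V (hh H g c)) := by
    rw [Equiv.Perm.permMatrix, PEquiv.toMatrix_toPEquiv_mul]
    ext ⟨i, c⟩ ⟨j, c'⟩
    simp only [m, Matrix.submatrix_apply, id, hπ, Equiv.prodCongrRight_apply,
      MulAction.toPerm_apply, Matrix.blockDiagonal_apply]
    by_cases h : g • c' = c
    · rw [if_pos h, if_pos (by rw [← h, inv_smul_smul])]
      rw [← h, inv_smul_smul]
    · rw [if_neg h, if_neg (fun hc => h (by rw [← hc, smul_inv_smul]))]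
  rw [hdecomp, Matrix.det_mul, Matrix.det_permutation, Matrix.det_blockDiagonal]
  have hsign : Equiv.Perm.sign π = 1 := by
    rw [hπ, Equiv.Perm.sign_prodCongrRight, Finset.prod_const, Finset.card_univ,
      Fintype.card_fin]
    obtain ⟨k, hk⟩ := heven
    rw [hk, pow_add, ← mul_pow, Int.units_mul_self, one_pow]
  rw [hsign]
  have hprod : ∀ c : G ⧸ H, (B H V (hh H g c)).det = 1 := fun c => det_B H V hdet _
  simp [hprod]

lemma fix_iff (g x : G) :
    g • (QuotientGroup.mk x : G ⧸ H) = QuotientGroup.mk x ↔ x⁻¹ * g * x ∈ H := by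
  show (QuotientGroup.mk (g * x) : G ⧸ H) = QuotientGroup.mk x ↔ _
  rw [QuotientGroup.eq]
  have h1 : (g * x)⁻¹ * x = (x⁻¹ * g * x)⁻¹ := by group
  rw [h1, inv_mem_iff]

lemma term_eq (g x : G) :
    (if h : x⁻¹ * g * x ∈ H then V.character ⟨x⁻¹ * g * x, h⟩ else 0)
      = (if g • (QuotientGroup.mk x : G ⧸ H) = QuotientGroup.mk x then
          V.character (hh H g (QuotientGroup.mk x)) else 0) := by
  by_cases hx : x⁻¹ * g * x ∈ H
  · rw [dif_pos hx, if_pos ((fix_iff H g x).mpr hx)]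
    set c : G ⧸ H := QuotientGroup.mk x with hc
    have hfix : g • c = c := (fix_iff H g x).mpr hx
    have hcx : (QuotientGroup.mk c.out : G ⧸ H) = QuotientGroup.mk x := by
      rw [QuotientGroup.out_eq']
    have hk : c.out⁻¹ * x ∈ H := QuotientGroup.eq.mp hcx
    have hval : (⟨x⁻¹ * g * x, hx⟩ : ↥H) = (⟨c.out⁻¹ * x, hk⟩ : ↥H)⁻¹ * hh H g c
        * (⟨c.out⁻¹ * x, hk⟩ : ↥H) := by
      apply Subtype.ext
      show x⁻¹ * g * x = (c.out⁻¹ * x)⁻¹ * ((g • c).out⁻¹ * g * c.out) * (c.out⁻¹ * x)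
      rw [hfix]
      group
    rw [hval]
    have := FDRep.char_conj V (hh H g c) (⟨c.out⁻¹ * x, hk⟩ : ↥H)⁻¹
    simpa using this
  · rw [dif_neg hx, if_neg (fun hc => hx ((fix_iff H g x).mp hc))]

lemma card_fiber (c : G ⧸ H) :
    ({x ∈ (Finset.univ : Finset G) | QuotientGroup.mk x = c} : Finset G).card
      = Nat.card ↥H := by
  have e : {x : G // QuotientGroup.mk x = c} ≃ ↥H :=
    { toFun := fun x => ⟨c.out⁻¹ * x.1, QuotientGroup.eq.mp (by rw [QuotientGroup.out_eq', x.2])⟩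
      invFun := fun h => ⟨c.out * h.1,
        by rw [QuotientGroup.mk_mul_of_mem c.out h.2, QuotientGroup.out_eq']⟩
      left_inv := fun x => by ext; simp
      right_inv := fun h => by ext; simp }
  rw [← Fintype.card_subtype, Fintype.card_congr e, Nat.card_eq_fintype_card]

lemma indChar_eq (g : G) : indChar H V.character g
    = ∑ c : G ⧸ H, (if g • c = c then V.character (hh H g c) else 0) := by
  rw [indChar]
  rw [Finset.sum_congr rfl fun x _ => term_eq H V g x]
  rw [Finset.sum_comp (fun c : G ⧸ H => if g • c = c then V.character (hh H g c) else 0)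
    (QuotientGroup.mk : G → G ⧸ H)]
  rw [Finset.image_univ_of_surjective QuotientGroup.mk_surjective]
  simp only [card_fiber, nsmul_eq_mul]
  rw [← Finset.mul_sum, ← mul_assoc, inv_mul_cancel₀, one_mul]
  exact Nat.cast_ne_zero.mpr Nat.card_pos.ne'

end Statement7Aux

end Statement7Aux


/-- If `H ≤ G` and `τ` is the character of a finite-dimensional complex representation of `H`
with trivial determinant and even degree, then `Ind_H^G τ` has trivial determinant. -/
theorem statement7 (G : Type) [Group G] [Fintype G] (H : Subgroup G) (V : FDRep ℂ ↥H)
    (hdet : ∀ h : ↥H, detRep V h = 1) (heven : Even (Module.finrank ℂ V)) :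
    HasTrivialDet (indChar H V.character) := by
  haveI : Fintype (G ⧸ H) := Fintype.ofFinite _
  refine ⟨FDRep.of (Statement7Aux.rhoA H V), FDRep.of (1 : Representation ℂ G (Fin 0 → ℂ)),
    ?_, ?_⟩
  · funext g
    have hW : (FDRep.of (1 : Representation ℂ G (Fin 0 → ℂ))).character g = 0 := by
      show LinearMap.trace ℂ (Fin 0 → ℂ) ((1 : Representation ℂ G (Fin 0 → ℂ)) g) = 0
      have h0 : ((1 : Representation ℂ G (Fin 0 → ℂ)) g) = 0 := Subsingleton.elim _ _
      rw [h0, map_zero]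
    have hA : (FDRep.of (Statement7Aux.rhoA H V)).character g
        = ∑ c : G ⧸ H, (if g • c = c then V.character (Statement7Aux.hh H g c) else 0) := by
      show LinearMap.trace ℂ _ (Statement7Aux.rhoA H V g) = _
      exact Statement7Aux.trace_rhoA H V g
    rw [Pi.sub_apply, hW, hA, sub_zero]
    exact Statement7Aux.indChar_eq H V g
  · intro g
    have h1 : detRep (FDRep.of (Statement7Aux.rhoA H V)) g = 1 := by
      show LinearMap.det (Statement7Aux.rhoA H V g) = 1
      exact Statement7Aux.det_rhoA H V (fun h => hdet h) heven g
    have h2 : detRep (FDRep.of (1 : Representation ℂ G (Fin 0 → ℂ))) g = 1 := by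
      show LinearMap.det ((1 : Representation ℂ G (Fin 0 → ℂ)) g) = 1
      have h0 : ((1 : Representation ℂ G (Fin 0 → ℂ)) g)
          = (LinearMap.id : (Fin 0 → ℂ) →ₗ[ℂ] (Fin 0 → ℂ)) := rfl
      rw [h0, LinearMap.det_id]
    rw [h1, h2]
    simp
end

section
/- Let G be a finite group whose 2-Sylow subgroup N is normal and cyclic. Then G is the internal direct product G = N × G₀ of N with a subgroup G₀ ≤ G of odd order; in particular G has a normal complement of odd order to its 2-Sylow subgroup and the conjugation action of G₀ on N is trivial. -/
open scoped Classical

/-- If the `2`-Sylow subgroup `N` of a finite group `G` is normal and cyclic, then `G` is the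
internal direct product `G = N × G₀` of `N` with a subgroup `G₀ ≤ G` of odd order; in
particular `G₀` is a normal complement of odd order to `N` and the conjugation action of
`G₀` on `N` is trivial. -/
theorem statement16 (G : Type) [Group G] [Fintype G] (N : Sylow 2 G)
    (hN : (N : Subgroup G).Normal) (hcyc : IsCyclic ↥(N : Subgroup G)) :
    ∃ G₀ : Subgroup G, Odd (Nat.card G₀) ∧ G₀.Normal ∧
      (N : Subgroup G) ⊓ G₀ = ⊥ ∧ (N : Subgroup G) ⊔ G₀ = ⊤ ∧
      ∀ g ∈ G₀, ∀ n ∈ (N : Subgroup G), g * n * g⁻¹ = n := by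
  haveI : Fact (Nat.Prime 2) := ⟨Nat.prime_two⟩
  obtain ⟨K, hK⟩ := Subgroup.exists_right_complement'_of_coprime
    (N := (N : Subgroup G)) N.card_coprime_index
  have hcard : Nat.card K = (N : Subgroup G).index := hK.symm.index_eq_card.symm
  have hodd : Odd (Nat.card K) := by
    have h2 : ¬ 2 ∣ Nat.card K := by rw [hcard]; exact N.not_dvd_index
    exact Nat.odd_iff.mpr (Nat.two_dvd_ne_zero.mp h2)
  obtain ⟨n, hn⟩ := IsPGroup.exists_card_eq N.isPGroup'
  have hAut : Nat.card (MulAut ↥(N : Subgroup G)) ∣ 2 ^ n := by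
    rw [IsCyclic.card_mulAut, hn]
    rcases Nat.eq_zero_or_pos n with h0 | h0
    · simp [h0]
    · rw [Nat.totient_prime_pow Nat.prime_two h0]
      simpa using pow_dvd_pow 2 (Nat.sub_le n 1)
  have htriv : ∀ g ∈ K, ∀ m ∈ (N : Subgroup G), g * m * g⁻¹ = m := by
    intro g hg m hm
    have h1 : orderOf (MulAut.conjNormal (H := (N : Subgroup G)) g) ∣ Nat.card K := by
      refine dvd_trans (orderOf_map_dvd _ g) ?_
      have := orderOf_dvd_natCard (⟨g, hg⟩ : K)
      rwa [Subgroup.orderOf_mk] at this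
    have h2 : orderOf (MulAut.conjNormal (H := (N : Subgroup G)) g) ∣ 2 ^ n :=
      dvd_trans (orderOf_dvd_natCard _) hAut
    have hcop : Nat.Coprime (Nat.card K) (2 ^ n) :=
      Nat.Coprime.pow_right _ hodd.coprime_two_right
    have hord : orderOf (MulAut.conjNormal (H := (N : Subgroup G)) g) = 1 :=
      Nat.dvd_one.mp (hcop ▸ Nat.dvd_gcd h1 h2)
    have heq : MulAut.conjNormal (H := (N : Subgroup G)) g = 1 := orderOf_eq_one_iff.mp hord
    have := congrArg (fun φ : MulAut ↥(N : Subgroup G) => (φ ⟨m, hm⟩ : G)) heq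
    simpa [MulAut.conjNormal_apply] using this
  have hcomm : ∀ k ∈ K, ∀ x ∈ (N : Subgroup G), k * x = x * k := by
    intro k hk x hx
    have h := htriv k hk x hx
    calc k * x = (k * x * k⁻¹) * k := by group
      _ = x * k := by rw [h]
  refine ⟨K, hodd, ?_, (hK.disjoint).eq_bot, hK.sup_eq_top, htriv⟩
  rw [← Subgroup.normalizer_eq_top_iff, eq_top_iff, ← hK.sup_eq_top, sup_le_iff]
  refine ⟨?_, Subgroup.le_normalizer⟩
  intro x hx
  rw [Subgroup.mem_normalizer_iff]
  intro k
  constructor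
  · intro hk
    have h : x * k * x⁻¹ = k := by
      have := hcomm k hk x hx
      calc x * k * x⁻¹ = (x * k) * x⁻¹ := by group
        _ = (k * x) * x⁻¹ := by rw [this]
        _ = k := by group
    rwa [h]
  · intro hk
    have h := hcomm _ hk x hx
    have hkey : k = x * k * x⁻¹ := by
      apply mul_left_cancel (a := x)
      calc x * k = (x * k * x⁻¹) * x := by group
        _ = x * (x * k * x⁻¹) := h
    rw [hkey]; exact hk
end
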